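/- arXiv:1702.00121 — 2 statements merged into one kernel-verified Lean document; each statement's English description precedes it below -/
import Mathlib

section
/- Let ℓ be an odd prime. The set of indices [N_ns(ℓ) : G] over subgroups G of N_ns(ℓ) that belong to the split Cartan C_s(ℓ) equals the set of positive integers divisible by ℓ+1 and dividing ℓ²−1. -/
open Matrix

abbrev GL2 (ℓ : ℕ) : Type := GL (Fin 2) (ZMod ℓ)

namespace Paper

/-- The underlying matrix of an element of `GL₂(ℤ/ℓℤ)`. -/
def mat {ℓ : ℕ} (g : GL2 ℓ) : Matrix (Fin 2) (Fin 2) (ZMod ℓ) := ↑g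

/-- The set of scalar matrices `Z(ℓ)`. -/
def ZSet (ℓ : ℕ) : Set (GL2 ℓ) :=
  { g | ∃ x : ZMod ℓ, mat g = x • (1 : Matrix (Fin 2) (Fin 2) (ZMod ℓ)) }

/-- The split Cartan `C_s(ℓ)`: invertible diagonal matrices. -/
def CsSet (ℓ : ℕ) : Set (GL2 ℓ) := { g | mat g 0 1 = 0 ∧ mat g 1 0 = 0 }

/-- The normalizer `N_s(ℓ)` of the split Cartan: diagonal and antidiagonal matrices. -/
def NsSet (ℓ : ℕ) : Set (GL2 ℓ) :=
  CsSet ℓ ∪ { g | mat g 0 0 = 0 ∧ mat g 1 1 = 0 }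

/-- The nonsplit Cartan `C_ns(ℓ)` relative to the nonsquare `ε`. -/
def CnsSet (ℓ : ℕ) (ε : ZMod ℓ) : Set (GL2 ℓ) :=
  { g | ∃ x y : ZMod ℓ, mat g = !![x, ε * y; y, x] }

/-- The normalizer `N_ns(ℓ)` of the nonsplit Cartan. -/
def NnsSet (ℓ : ℕ) (ε : ZMod ℓ) : Set (GL2 ℓ) :=
  CnsSet ℓ ε ∪ { g | ∃ x y : ZMod ℓ, mat g = !![x, -(ε * y); y, -x] }

/-- The ramified Cartan `C_r(ℓ)`. -/
def CrSet (ℓ : ℕ) : Set (GL2 ℓ) :=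
  { g | mat g 1 0 = 0 ∧ mat g 0 0 = mat g 1 1 }

/-- The Borel subgroup `B(ℓ)`: upper triangular matrices. -/
def BorelSet (ℓ : ℕ) : Set (GL2 ℓ) := { g | mat g 1 0 = 0 }

/-- `G` is conjugate in `GL₂(ℤ/ℓℤ)` to a subgroup of the set `M`. -/
def ConjSub {ℓ : ℕ} (G : Subgroup (GL2 ℓ)) (M : Set (GL2 ℓ)) : Prop :=
  ∃ a : GL2 ℓ, ∀ g ∈ G, a * g * a⁻¹ ∈ M

/-- `G` belongs to `Z(ℓ)`. -/
def BelongsZ {ℓ : ℕ} (G : Subgroup (GL2 ℓ)) : Prop := ConjSub G (ZSet ℓ)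

/-- `G` belongs to `C_s(ℓ)`. -/
def BelongsCs {ℓ : ℕ} (G : Subgroup (GL2 ℓ)) : Prop :=
  ConjSub G (CsSet ℓ) ∧ ¬ ConjSub G (ZSet ℓ)

/-- `G` belongs to `C_ns(ℓ)`. -/
def BelongsCns {ℓ : ℕ} (ε : ZMod ℓ) (G : Subgroup (GL2 ℓ)) : Prop :=
  ConjSub G (CnsSet ℓ ε) ∧ ¬ ConjSub G (ZSet ℓ)

/-- `G` belongs to `N_s(ℓ)`. -/
def BelongsNs {ℓ : ℕ} (G : Subgroup (GL2 ℓ)) : Prop :=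
  ConjSub G (NsSet ℓ) ∧ ¬ ConjSub G (CsSet ℓ)

/-- `G` belongs to `N_ns(ℓ)`. -/
def BelongsNns {ℓ : ℕ} (ε : ZMod ℓ) (G : Subgroup (GL2 ℓ)) : Prop :=
  ConjSub G (NnsSet ℓ ε) ∧ ¬ ConjSub G (CnsSet ℓ ε)

/-- `G` belongs to the ramified Cartan `C_r(ℓ)`. -/
def BelongsCr {ℓ : ℕ} (G : Subgroup (GL2 ℓ)) : Prop :=
  ConjSub G (CrSet ℓ) ∧ ¬ ConjSub G (ZSet ℓ)

/-- `H` is a twist of `G`: either `H = ⟨G, -I⟩`, or `H` is an index-2 subgroup of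
`⟨G, -I⟩` not containing `-I`. -/
def TwistOf {ℓ : ℕ} (G H : Subgroup (GL2 ℓ)) : Prop :=
  H = G ⊔ Subgroup.closure {(-1 : GL2 ℓ)} ∨
    (H ≤ G ⊔ Subgroup.closure {(-1 : GL2 ℓ)} ∧
      H.relIndex (G ⊔ Subgroup.closure {(-1 : GL2 ℓ)}) = 2 ∧
      (-1 : GL2 ℓ) ∉ H)

/-- `H` fixes a nonzero vector of `(ℤ/ℓℤ)²`. -/
def FixesVec {ℓ : ℕ} (H : Subgroup (GL2 ℓ)) : Prop :=
  ∃ v : Fin 2 → ZMod ℓ, v ≠ 0 ∧ ∀ h ∈ H, Matrix.mulVec (mat h) v = v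

end Paper

/-!
A non-scalar element `!![x, ε y; y, x]` of `C_ns(ℓ)` has discriminant `ε (2y)²`, a non-square, so it
is not diagonalizable. Hence a subgroup `G ≤ N_ns(ℓ)` belonging to `C_s(ℓ)` meets `C_ns(ℓ)` in a
group `S` of scalars, and, not being scalar, contains an element `g₀` of the other coset; as `g₀²` is
scalar, `G = S ∪ g₀ S` and `|G| = 2 |S|` with `|S| ∣ ℓ - 1`. Since `|N_ns(ℓ)| = 2 (ℓ² - 1)`, the index
is `(ℓ² - 1) / |S|`. Conversely every subgroup `S` of the cyclic group `(ℤ/ℓℤ)ˣ` gives such a `G`,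
namely `S ∪ diag(1, -1) S`.
-/

namespace Paper

local notation "σ" => GeneralLinearGroup.scalar (Fin 2)

lemma relIndex_mul_natCard {G : Type*} [Group G] {H K : Subgroup G} (h : H ≤ K) :
    H.relIndex K * Nat.card H = Nat.card K := by
  rw [← (H.subgroupOf K).card_mul_index, mul_comm, Subgroup.relIndex,
    Nat.card_congr (Subgroup.subgroupOfEquivOfLe h).toEquiv]

lemma exists_subgroup_natCard_eq {α : Type*} [Group α] [IsCyclic α] [Finite α] {d : ℕ}
    (hd : d ∣ Nat.card α) : ∃ H : Subgroup α, Nat.card H = d := by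
  obtain ⟨g, hg⟩ := IsCyclic.exists_ofOrder_eq_natCard (α := α)
  refine ⟨Subgroup.zpowers (g ^ (orderOf g / d)), ?_⟩
  rw [Nat.card_zpowers, orderOf_pow_orderOf_div (hg ▸ Nat.card_pos.ne') (hg ▸ hd)]

lemma exists_dvd_mul_eq_iff {p q n : ℕ} (hp : 0 < p) (hq : 0 < q) :
    (∃ d, d ∣ q ∧ n * d = p * q) ↔ 0 < n ∧ p ∣ n ∧ n ∣ p * q := by
  constructor
  · rintro ⟨d, ⟨m, rfl⟩, h⟩
    have hd : 0 < d := Nat.pos_of_mul_pos_right hq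
    have hn : n = p * m := Nat.eq_of_mul_eq_mul_right hd (by rw [h]; ring)
    subst hn
    exact ⟨Nat.mul_pos hp (Nat.pos_of_mul_pos_left hq), dvd_mul_right p m, ⟨d, h.symm⟩⟩
  · rintro ⟨hn, ⟨m, rfl⟩, hdvd⟩
    obtain ⟨d, rfl⟩ := (Nat.mul_dvd_mul_iff_left hp).mp hdvd
    exact ⟨d, dvd_mul_left d m, by ring⟩

section Entries

variable {ℓ : ℕ}

/-- The coset `N_ns(ℓ) \ C_ns(ℓ)`; `NnsSet ℓ ε = CnsSet ℓ ε ∪ NnsOuterSet ℓ ε` definitionally. -/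
def NnsOuterSet (ℓ : ℕ) (ε : ZMod ℓ) : Set (GL2 ℓ) :=
  { g | ∃ x y : ZMod ℓ, mat g = !![x, -(ε * y); y, -x] }

lemma mat_mul_apply (g h : GL2 ℓ) (i j : Fin 2) :
    mat (g * h) i j = mat g i 0 * mat h 0 j + mat g i 1 * mat h 1 j := by
  simp [mat, Matrix.mul_apply, Fin.sum_univ_two]

@[simp]
lemma mat_scalar (u : (ZMod ℓ)ˣ) : mat (σ u) = Matrix.scalar (Fin 2) (u : ZMod ℓ) := rfl

lemma mem_CnsSet_iff {ε : ZMod ℓ} {g : GL2 ℓ} :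
    g ∈ CnsSet ℓ ε ↔ mat g 0 1 = ε * mat g 1 0 ∧ mat g 1 1 = mat g 0 0 := by
  constructor
  · rintro ⟨x, y, h⟩
    simp [h]
  · rintro ⟨h01, h11⟩
    refine ⟨mat g 0 0, mat g 1 0, ?_⟩
    ext i j
    fin_cases i <;> fin_cases j <;> simp [h01, h11]

lemma mem_NnsOuterSet_iff {ε : ZMod ℓ} {g : GL2 ℓ} :
    g ∈ NnsOuterSet ℓ ε ↔ mat g 0 1 = -(ε * mat g 1 0) ∧ mat g 1 1 = -mat g 0 0 := by
  constructor
  · rintro ⟨x, y, h⟩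
    simp [h]
  · rintro ⟨h01, h11⟩
    refine ⟨mat g 0 0, mat g 1 0, ?_⟩
    ext i j
    fin_cases i <;> fin_cases j <;> simp [h01, h11]

variable {ε : ZMod ℓ} {g h : GL2 ℓ}

lemma scalar_mem_CnsSet (u : (ZMod ℓ)ˣ) : σ u ∈ CnsSet ℓ ε :=
  ⟨u, 0, by ext i j; fin_cases i <;> fin_cases j <;> simp⟩

lemma mul_mem_NnsOuterSet (hg : g ∈ NnsOuterSet ℓ ε) (hh : h ∈ CnsSet ℓ ε) :
    g * h ∈ NnsOuterSet ℓ ε := by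
  obtain ⟨g01, g11⟩ := mem_NnsOuterSet_iff.mp hg
  obtain ⟨h01, h11⟩ := mem_CnsSet_iff.mp hh
  rw [mem_NnsOuterSet_iff]
  simp only [mat_mul_apply, g01, g11, h01, h11]
  constructor <;> ring

lemma mul_mem_CnsSet_of_mem_NnsOuterSet (hg : g ∈ NnsOuterSet ℓ ε) (hh : h ∈ NnsOuterSet ℓ ε) :
    g * h ∈ CnsSet ℓ ε := by
  obtain ⟨g01, g11⟩ := mem_NnsOuterSet_iff.mp hg
  obtain ⟨h01, h11⟩ := mem_NnsOuterSet_iff.mp hh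
  rw [mem_CnsSet_iff]
  simp only [mat_mul_apply, g01, g11, h01, h11]
  constructor <;> ring

lemma mem_ZSet_of_conj_mem {a : GL2 ℓ} (h : a * g * a⁻¹ ∈ ZSet ℓ) : g ∈ ZSet ℓ := by
  obtain ⟨x, hx⟩ := h
  refine ⟨x, ?_⟩
  have hg : g = a⁻¹ * (a * g * a⁻¹) * a := by group
  rw [hg]
  simp only [mat, Units.val_mul] at hx ⊢
  rw [hx, Matrix.mul_smul, Matrix.mul_one, Matrix.smul_mul, ← Units.val_mul, inv_mul_cancel,
    Units.val_one]

lemma isSquare_discr_of_conj_mem_CsSet {a : GL2 ℓ} (h : a * g * a⁻¹ ∈ CsSet ℓ) :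
    IsSquare ((mat g).trace ^ 2 - 4 * (mat g).det) := by
  have htr : (mat g).trace = (mat (a * g * a⁻¹)).trace := (Matrix.trace_units_conj a _).symm
  have hdet : (mat g).det = (mat (a * g * a⁻¹)).det := (Matrix.det_units_conj a _).symm
  rw [htr, hdet, Matrix.trace_fin_two, Matrix.det_fin_two, h.1, h.2]
  exact ⟨mat (a * g * a⁻¹) 0 0 - mat (a * g * a⁻¹) 1 1, by ring⟩

end Entries

section Prime

variable {ℓ : ℕ} [Fact ℓ.Prime] {ε : ZMod ℓ} {g : GL2 ℓ}

lemma two_ne_zero_of_odd (hodd : Odd ℓ) : (2 : ZMod ℓ) ≠ 0 := by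
  apply Ring.two_ne_zero
  rw [ZMod.ringChar_zmod_n]
  rintro rfl
  exact absurd hodd (by decide)

lemma eq_zero_of_sq_eq_mul_sq (hε : ∀ t : ZMod ℓ, t ^ 2 ≠ ε) {r y : ZMod ℓ}
    (h : r ^ 2 = ε * y ^ 2) : y = 0 := by
  by_contra hy
  apply hε (r / y)
  rw [div_pow, h]
  field_simp

lemma scalar_injective : Function.Injective (σ : (ZMod ℓ)ˣ →* GL2 ℓ) := by
  intro u v h
  have h00 := congrFun (congrFun (congrArg mat h) 0) 0
  simpa [Units.ext_iff] using h00

lemma prodMk_ne_zero_of_mem_CnsSet (hg : g ∈ CnsSet ℓ ε) : (mat g 0 0, mat g 1 0) ≠ 0 := by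
  intro h
  obtain ⟨h00, h10⟩ := Prod.ext_iff.mp h
  obtain ⟨g01, g11⟩ := mem_CnsSet_iff.mp hg
  refine g.ne_zero (?_ : mat g = 0)
  ext i j
  fin_cases i <;> fin_cases j <;> simp_all

lemma exists_scalar_eq_of_mem_CnsSet (hg : g ∈ CnsSet ℓ ε) (h10 : mat g 1 0 = 0) :
    ∃ u, σ u = g := by
  obtain ⟨g01, g11⟩ := mem_CnsSet_iff.mp hg
  have h00 : mat g 0 0 ≠ 0 := fun h00 ↦ prodMk_ne_zero_of_mem_CnsSet hg (by simp [h00, h10])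
  refine ⟨Units.mk0 _ h00, Units.ext (?_ : mat _ = mat g)⟩
  ext i j
  fin_cases i <;> fin_cases j <;> simp [g01, g11, h10]

lemma mat_apply_one_zero_eq_zero_of_conj_mem_CsSet (hodd : Odd ℓ)
    (hε : ∀ t : ZMod ℓ, t ^ 2 ≠ ε) (hg : g ∈ CnsSet ℓ ε) {a : GL2 ℓ}
    (h : a * g * a⁻¹ ∈ CsSet ℓ) : mat g 1 0 = 0 := by
  obtain ⟨r, hr⟩ := isSquare_discr_of_conj_mem_CsSet h
  obtain ⟨x, y, hxy⟩ := hg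
  rw [hxy, Matrix.trace_fin_two_of, Matrix.det_fin_two_of] at hr
  have hy : 2 * y = 0 := eq_zero_of_sq_eq_mul_sq hε (r := r) (by linear_combination -hr)
  simpa [hxy, two_ne_zero_of_odd hodd] using hy

lemma exists_scalar_eq_mul_self (hg : g ∈ NnsOuterSet ℓ ε) : ∃ c, σ c = g * g := by
  refine exists_scalar_eq_of_mem_CnsSet (mul_mem_CnsSet_of_mem_NnsOuterSet hg hg) ?_
  obtain ⟨-, g11⟩ := mem_NnsOuterSet_iff.mp hg
  rw [mat_mul_apply, g11]
  ring

lemma inv_mem_NnsOuterSet (hg : g ∈ NnsOuterSet ℓ ε) : g⁻¹ ∈ NnsOuterSet ℓ ε := by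
  obtain ⟨c, hc⟩ := exists_scalar_eq_mul_self hg
  have hinv : g⁻¹ = g * σ c⁻¹ := inv_eq_of_mul_eq_one_right <| by
    rw [← mul_assoc, ← hc, ← map_mul, mul_inv_cancel, map_one]
  rw [hinv]
  exact mul_mem_NnsOuterSet hg (scalar_mem_CnsSet _)

lemma disjoint_CnsSet_NnsOuterSet (hodd : Odd ℓ) (hε : ∀ t : ZMod ℓ, t ^ 2 ≠ ε) :
    Disjoint (CnsSet ℓ ε) (NnsOuterSet ℓ ε) := by
  refine Set.disjoint_left.mpr fun g hc ho ↦ prodMk_ne_zero_of_mem_CnsSet hc ?_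
  obtain ⟨c01, c11⟩ := mem_CnsSet_iff.mp hc
  obtain ⟨o01, o11⟩ := mem_NnsOuterSet_iff.mp ho
  have hε0 : ε ≠ 0 := fun h ↦ hε 0 (by simp [h])
  have h00 : 2 * mat g 0 0 = 0 := by linear_combination o11 - c11
  have h10 : 2 * ε * mat g 1 0 = 0 := by linear_combination o01 - c01
  simp_all [two_ne_zero_of_odd hodd]

noncomputable def cnsOfNeZero (hε : ∀ t : ZMod ℓ, t ^ 2 ≠ ε) (p : ZMod ℓ × ZMod ℓ)
    (hp : p ≠ 0) : GL2 ℓ :=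
  GeneralLinearGroup.mkOfDetNeZero !![p.1, ε * p.2; p.2, p.1] <| by
    rw [Matrix.det_fin_two_of]
    intro h
    have hy : p.2 = 0 := eq_zero_of_sq_eq_mul_sq hε (r := p.1) (by linear_combination h)
    have hx : p.1 = 0 := by simpa [hy] using h
    exact hp (Prod.ext hx hy)

lemma natCard_CnsSet (hε : ∀ t : ZMod ℓ, t ^ 2 ≠ ε) : Nat.card (CnsSet ℓ ε) = ℓ ^ 2 - 1 := by
  have e : {p : ZMod ℓ × ZMod ℓ // p ≠ 0} ≃ CnsSet ℓ ε :=
    { toFun p := ⟨cnsOfNeZero hε p.1 p.2, p.1.1, p.1.2, rfl⟩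
      invFun g := ⟨(mat g 0 0, mat g 1 0), prodMk_ne_zero_of_mem_CnsSet g.2⟩
      left_inv p := rfl
      right_inv g := by
        obtain ⟨g01, g11⟩ := mem_CnsSet_iff.mp g.2
        simp only [mat] at g01 g11
        refine Subtype.ext <| Units.ext ?_
        ext i j
        fin_cases i <;> fin_cases j <;> simp [cnsOfNeZero, mat, g01, g11] }
  rw [← Nat.card_congr e]
  simp [Nat.card_eq_fintype_card, Fintype.card_subtype_compl, ZMod.card, sq]

variable (ℓ) in
noncomputable def reflDiag : GL2 ℓ :=
  GeneralLinearGroup.mkOfDetNeZero !![1, 0; 0, -1] (by simp)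

lemma reflDiag_mem_NnsOuterSet : reflDiag ℓ ∈ NnsOuterSet ℓ ε :=
  ⟨1, 0, by simp [reflDiag, mat]⟩

lemma reflDiag_mul_self : reflDiag ℓ * reflDiag ℓ = 1 :=
  Units.ext <| by simp [reflDiag, Matrix.one_fin_two]

lemma reflDiag_not_mem_ZSet (hodd : Odd ℓ) : reflDiag ℓ ∉ ZSet ℓ := by
  rintro ⟨x, hx⟩
  have h00 := congrFun (congrFun hx 0) 0
  have h11 := congrFun (congrFun hx 1) 1
  simp [reflDiag, mat] at h00 h11
  exact two_ne_zero_of_odd hodd (by linear_combination h00 - h11)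

lemma natCard_NnsOuterSet : Nat.card (NnsOuterSet ℓ ε) = Nat.card (CnsSet ℓ ε) :=
  Nat.card_congr
    { toFun g := ⟨reflDiag ℓ * g, mul_mem_CnsSet_of_mem_NnsOuterSet reflDiag_mem_NnsOuterSet g.2⟩
      invFun g := ⟨reflDiag ℓ * g, mul_mem_NnsOuterSet reflDiag_mem_NnsOuterSet g.2⟩
      left_inv g := Subtype.ext <| by simp [← mul_assoc, reflDiag_mul_self]
      right_inv g := Subtype.ext <| by simp [← mul_assoc, reflDiag_mul_self] }

lemma natCard_NnsSet (hodd : Odd ℓ) (hε : ∀ t : ZMod ℓ, t ^ 2 ≠ ε) :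
    Nat.card (NnsSet ℓ ε) = 2 * (ℓ ^ 2 - 1) := by
  change Nat.card ↥(CnsSet ℓ ε ∪ NnsOuterSet ℓ ε) = _
  rw [Nat.card_coe_set_eq, Set.ncard_union_eq (disjoint_CnsSet_NnsOuterSet hodd hε),
    ← Nat.card_coe_set_eq, ← Nat.card_coe_set_eq, natCard_NnsOuterSet, natCard_CnsSet hε,
    two_mul]

lemma natCard_eq_two_mul_of_coe_eq (hodd : Odd ℓ) (hε : ∀ t : ZMod ℓ, t ^ 2 ≠ ε)
    {G : Subgroup (GL2 ℓ)} {S : Subgroup (ZMod ℓ)ˣ} {g₀ : GL2 ℓ} (hg₀ : g₀ ∈ NnsOuterSet ℓ ε)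
    (hG : (G : Set (GL2 ℓ)) = σ '' S ∪ (g₀ * ·) '' (σ '' S)) :
    Nat.card G = 2 * Nat.card S := by
  have hdisj : Disjoint (σ '' (S : Set (ZMod ℓ)ˣ)) ((g₀ * ·) '' (σ '' S)) := by
    refine (disjoint_CnsSet_NnsOuterSet hodd hε).mono ?_ ?_
    · rintro _ ⟨u, -, rfl⟩
      exact scalar_mem_CnsSet u
    · rintro _ ⟨_, ⟨u, -, rfl⟩, rfl⟩
      exact mul_mem_NnsOuterSet hg₀ (scalar_mem_CnsSet u)
  rw [← SetLike.coe_sort_coe, Nat.card_coe_set_eq, hG, Set.ncard_union_eq hdisj,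
    Set.ncard_image_of_injective _ (mul_right_injective g₀),
    Set.ncard_image_of_injective _ scalar_injective, two_mul, ← Nat.card_coe_set_eq]
  rfl

lemma coe_eq_of_belongsCs (hodd : Odd ℓ) (hε : ∀ t : ZMod ℓ, t ^ 2 ≠ ε)
    {G : Subgroup (GL2 ℓ)} (hGN : (G : Set (GL2 ℓ)) ⊆ NnsSet ℓ ε) (hG : BelongsCs G) :
    ∃ g₀ ∈ NnsOuterSet ℓ ε,
      (G : Set (GL2 ℓ)) = σ '' (G.comap σ) ∪ (g₀ * ·) '' (σ '' (G.comap σ)) := by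
  obtain ⟨⟨a, ha⟩, hZ⟩ := hG
  have hscalar : ∀ g ∈ G, g ∈ CnsSet ℓ ε → ∃ u, σ u = g := fun g hg hc ↦
    exists_scalar_eq_of_mem_CnsSet hc
      (mat_apply_one_zero_eq_zero_of_conj_mem_CsSet hodd hε hc (ha g hg))
  obtain ⟨g₀, hg₀G, hg₀⟩ : ∃ g₀ ∈ G, g₀ ∈ NnsOuterSet ℓ ε := by
    by_contra! hout
    refine hZ ⟨1, fun g hg ↦ ?_⟩
    obtain ⟨u, rfl⟩ := hscalar g hg ((hGN hg).resolve_right (hout g hg))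
    exact ⟨u, by simp [Matrix.smul_one_eq_diagonal]⟩
  refine ⟨g₀, hg₀, Set.Subset.antisymm (fun g hg ↦ ?_) ?_⟩
  · rcases hGN hg with hc | ho
    · obtain ⟨u, rfl⟩ := hscalar g hg hc
      exact Or.inl ⟨u, hg, rfl⟩
    · have hmem : g₀⁻¹ * g ∈ G := G.mul_mem (G.inv_mem hg₀G) hg
      obtain ⟨u, hu⟩ := hscalar _ hmem
        (mul_mem_CnsSet_of_mem_NnsOuterSet (inv_mem_NnsOuterSet hg₀) ho)
      exact Or.inr ⟨_, ⟨u, by rwa [SetLike.mem_coe, Subgroup.mem_comap, hu], rfl⟩,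
        by simp [hu]⟩
  · rintro _ (⟨u, hu, rfl⟩ | ⟨_, ⟨u, hu, rfl⟩, rfl⟩)
    · exact hu
    · exact G.mul_mem hg₀G hu

def scalarReflSubgroup (S : Subgroup (ZMod ℓ)ˣ) : Subgroup (GL2 ℓ) where
  carrier := σ '' S ∪ (reflDiag ℓ * ·) '' (σ '' S)
  one_mem' := Or.inl ⟨1, S.one_mem, map_one σ⟩
  mul_mem' := by
    have hw := reflDiag_mul_self (ℓ := ℓ)
    rintro _ _ (⟨s, hs, rfl⟩ | ⟨_, ⟨s, hs, rfl⟩, rfl⟩) (⟨t, ht, rfl⟩ | ⟨_, ⟨t, ht, rfl⟩, rfl⟩)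
    · exact Or.inl ⟨s * t, S.mul_mem hs ht, map_mul σ s t⟩
    · refine Or.inr ⟨_, ⟨s * t, S.mul_mem hs ht, rfl⟩, ?_⟩
      dsimp only
      rw [map_mul, ← mul_assoc, ← mul_assoc, GeneralLinearGroup.scalar_commute]
    · exact Or.inr ⟨_, ⟨s * t, S.mul_mem hs ht, rfl⟩, by simp only [map_mul, mul_assoc]⟩
    · refine Or.inl ⟨s * t, S.mul_mem hs ht, ?_⟩
      dsimp only
      rw [mul_assoc, ← mul_assoc (σ s), GeneralLinearGroup.scalar_commute, mul_assoc,
        ← mul_assoc, hw, one_mul, map_mul]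
  inv_mem' := by
    have hw : (reflDiag ℓ)⁻¹ = reflDiag ℓ := inv_eq_of_mul_eq_one_right reflDiag_mul_self
    rintro _ (⟨s, hs, rfl⟩ | ⟨_, ⟨s, hs, rfl⟩, rfl⟩)
    · exact Or.inl ⟨s⁻¹, S.inv_mem hs, map_inv σ s⟩
    · refine Or.inr ⟨_, ⟨s⁻¹, S.inv_mem hs, rfl⟩, ?_⟩
      dsimp only
      rw [_root_.mul_inv_rev, hw, ← map_inv, GeneralLinearGroup.scalar_commute]

lemma coe_scalarReflSubgroup_subset_NnsSet (S : Subgroup (ZMod ℓ)ˣ) :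
    (scalarReflSubgroup S : Set (GL2 ℓ)) ⊆ NnsSet ℓ ε := by
  rintro _ (⟨u, -, rfl⟩ | ⟨_, ⟨u, -, rfl⟩, rfl⟩)
  · exact Or.inl (scalar_mem_CnsSet u)
  · exact Or.inr (mul_mem_NnsOuterSet reflDiag_mem_NnsOuterSet (scalar_mem_CnsSet u))

lemma belongsCs_scalarReflSubgroup (hodd : Odd ℓ) (S : Subgroup (ZMod ℓ)ˣ) :
    BelongsCs (scalarReflSubgroup S) := by
  refine ⟨⟨1, ?_⟩, fun ⟨a, ha⟩ ↦ ?_⟩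
  · rintro _ (⟨u, -, rfl⟩ | ⟨_, ⟨u, -, rfl⟩, rfl⟩)
    · simp [CsSet]
    · simp [CsSet, reflDiag, mat]
  · have hw : reflDiag ℓ ∈ scalarReflSubgroup S :=
      Or.inr ⟨1, ⟨1, S.one_mem, map_one σ⟩, mul_one _⟩
    exact reflDiag_not_mem_ZSet hodd (mem_ZSet_of_conj_mem (ha _ hw))

end Prime

end Paper

theorem statement_13 (ℓ : ℕ) (hℓ : Nat.Prime ℓ) (hodd : Odd ℓ) (ε : ZMod ℓ)
    (hε : ∀ t : ZMod ℓ, t ^ 2 ≠ ε)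
    (Nns : Subgroup (GL2 ℓ)) (hNns : (Nns : Set (GL2 ℓ)) = Paper.NnsSet ℓ ε) :
    { n : ℕ | ∃ G : Subgroup (GL2 ℓ), G ≤ Nns ∧ Paper.BelongsCs G ∧ G.relIndex Nns = n } =
      { n : ℕ | 0 < n ∧ (ℓ + 1) ∣ n ∧ n ∣ ℓ ^ 2 - 1 } := by
  have : Fact ℓ.Prime := ⟨hℓ⟩
  have hℓ1 : ℓ ^ 2 - 1 = (ℓ + 1) * (ℓ - 1) := by simpa using Nat.sq_sub_sq ℓ 1
  have hℓpos : 0 < ℓ - 1 := Nat.sub_pos_of_lt hℓ.one_lt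
  have hcardN : Nat.card Nns = 2 * ((ℓ + 1) * (ℓ - 1)) := by
    rw [← hℓ1, ← Paper.natCard_NnsSet hodd hε, ← hNns]
    rfl
  have hunits : Nat.card (ZMod ℓ)ˣ = ℓ - 1 := by
    rw [Nat.card_eq_fintype_card, ZMod.card_units]
  ext n
  rw [Set.mem_ofPred_eq, Set.mem_ofPred_eq, hℓ1, ← Paper.exists_dvd_mul_eq_iff ℓ.succ_pos hℓpos]
  constructor
  · rintro ⟨G, hle, hG, rfl⟩
    obtain ⟨g₀, hg₀, hcoe⟩ :=
      Paper.coe_eq_of_belongsCs hodd hε (hNns ▸ SetLike.coe_subset_coe.mpr hle) hG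
    have hindex := Paper.relIndex_mul_natCard hle
    rw [Paper.natCard_eq_two_mul_of_coe_eq hodd hε hg₀ hcoe, hcardN] at hindex
    exact ⟨_, hunits ▸ Subgroup.card_subgroup_dvd_card _, by linarith⟩
  · rintro ⟨d, hd, hnd⟩
    obtain ⟨S, hS⟩ := Paper.exists_subgroup_natCard_eq (hunits ▸ hd)
    have hle : Paper.scalarReflSubgroup S ≤ Nns :=
      SetLike.coe_subset_coe.mp (hNns ▸ Paper.coe_scalarReflSubgroup_subset_NnsSet S)
    refine ⟨_, hle, Paper.belongsCs_scalarReflSubgroup hodd S, ?_⟩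
    have hindex := Paper.relIndex_mul_natCard hle
    rw [Paper.natCard_eq_two_mul_of_coe_eq hodd hε Paper.reflDiag_mem_NnsOuterSet rfl, hS,
      hcardN] at hindex
    exact Nat.eq_of_mul_eq_mul_right (Nat.pos_of_dvd_of_pos hd hℓpos) (by linarith)
end

section
/- Let ℓ be an odd prime. Consider the set S of indices [N_s(ℓ) : G] over subgroups G of N_s(ℓ) such that some twist of G fixes a nonzero vector of (ℤ/ℓℤ)². Then ℓ−1 belongs to S, and every element of S is divisible by ℓ−1; that is, the set of div-minimal elements of S is {ℓ−1}. -/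
open Matrix

/-!
The diagonal subgroup `C_s(ℓ) ≅ (𝔽_ℓˣ)²` has index 2 in `N_s(ℓ)`, so `|N_s(ℓ)| = 2(ℓ - 1)²`.
An element of `N_s(ℓ)` of determinant 1 fixing a nonzero vector is the identity: a diagonal one
is `diag(a, a⁻¹)` with `a = 1` or `a⁻¹ = 1`, and an antidiagonal one squares to `-1`, which fixes
no nonzero vector since `ℓ` is odd. So the determinant is injective on a twist `H` fixing a
vector, giving `|H| ∣ ℓ - 1`. Such an `H` cannot be `⟨G, -1⟩`, so it has index 2 there, whence
`|G| ∣ 2(ℓ - 1)` and `ℓ - 1 ∣ [N_s(ℓ) : G]`. Equality is attained by `G = {diag(a, ±1)}` with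
the twist `H = {diag(a, 1)}`, which fixes `e₂`.
-/

namespace Subgroup

variable {G : Type*} [Group G]

theorem card_mul_relIndex {H K : Subgroup G} (h : H ≤ K) :
    Nat.card H * H.relIndex K = Nat.card K := by
  rw [← relIndex_bot_left, ← relIndex_bot_left]
  exact relIndex_mul_relIndex _ _ _ bot_le h

theorem dvd_relIndex_of_card_dvd [Finite G] {H K : Subgroup G} (h : H ≤ K) {m n : ℕ}
    (hK : Nat.card K = m * n) (hH : Nat.card H ∣ m) : n ∣ H.relIndex K := by
  obtain ⟨k, rfl⟩ := hH
  refine ⟨k, Nat.eq_of_mul_eq_mul_left (Nat.card_pos (α := H)) ?_⟩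
  rw [card_mul_relIndex h, hK]
  ring

end Subgroup

theorem Units.orderOf_neg_one {R : Type*} [Ring R] [Nontrivial R] (hR : ringChar R ≠ 2) :
    orderOf (-1 : Rˣ) = 2 := by
  rw [← orderOf_units, Units.val_neg, Units.val_one, _root_.orderOf_neg_one, if_neg hR]

theorem Pi.eq_zero_of_neg_eq_self {n K : Type*} [Field K] (hK : ringChar K ≠ 2) {v : n → K}
    (h : -v = v) : v = 0 :=
  funext fun i => (Ring.eq_self_iff_eq_zero_of_char_ne_two hK).1 (congrFun h i)

namespace Matrix

variable {n : Type*} {K : Type*} [Field K]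

theorem isDiag_fin_two_iff {α : Type*} [Zero α] {A : Matrix (Fin 2) (Fin 2) α} :
    A.IsDiag ↔ A 0 1 = 0 ∧ A 1 0 = 0 := by
  refine ⟨fun h => ⟨h (by decide), h (by decide)⟩, fun ⟨h01, h10⟩ i j hij => ?_⟩
  fin_cases i <;> fin_cases j <;> simp_all

theorem IsDiag.eq_one_of_det_eq_one_of_mulVec_eq_self {A : Matrix (Fin 2) (Fin 2) K}
    (hA : A.IsDiag) (hdet : A.det = 1) {v : Fin 2 → K} (hv0 : v ≠ 0) (hv : A *ᵥ v = v) :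
    A = 1 := by
  rw [← hA.diagonal_diag] at hdet hv ⊢
  rw [det_diagonal, Fin.prod_univ_two] at hdet
  have hfix : ∀ i, v i ≠ 0 → A i i = 1 := fun i hi =>
    mul_right_cancel₀ hi (by simpa [mulVec_diagonal] using congrFun hv i)
  obtain ⟨i, hi⟩ := Function.ne_iff.1 hv0
  rw [← diagonal_one]
  congr 1
  funext j
  fin_cases i <;> fin_cases j <;> simp_all [diag]

theorem eq_zero_of_mulVec_eq_self_of_antidiag (hK : ringChar K ≠ 2)
    {A : Matrix (Fin 2) (Fin 2) K} (h00 : A 0 0 = 0) (h11 : A 1 1 = 0) (hdet : A.det = 1)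
    {v : Fin 2 → K} (hv : A *ᵥ v = v) : v = 0 := by
  have hsq : A * A = -1 := by
    rw [det_fin_two, h00, h11] at hdet
    ext i j
    fin_cases i <;> fin_cases j <;> simp [mul_apply, h00, h11] <;> linear_combination -hdet
  refine Pi.eq_zero_of_neg_eq_self hK ?_
  calc -v = (A * A) *ᵥ v := by rw [hsq, neg_mulVec, one_mulVec]
    _ = v := by rw [← mulVec_mulVec, hv, hv]

namespace GeneralLinearGroup

variable [Fintype n] [DecidableEq n]

variable (n K) in
def diagonalUnits : (n → Kˣ) →* GL n K where
  toFun u := ⟨diagonal fun i => u i, diagonal fun i => ↑(u i)⁻¹, by simp, by simp⟩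
  map_one' := Units.ext diagonal_one
  map_mul' u w := Units.ext (diagonal_mul_diagonal _ _).symm

@[simp]
theorem coe_diagonalUnits (u : n → Kˣ) :
    (diagonalUnits n K u : Matrix n n K) = diagonal fun i => (u i : K) :=
  rfl

theorem diagonalUnits_injective : Function.Injective (diagonalUnits n K) := by
  intro u w h
  funext i
  have := congrArg (fun g : GL n K => (g : Matrix n n K) i i) h
  exact Units.ext (by simpa using this)

theorem mem_range_diagonalUnits_iff {g : GL n K} :
    g ∈ (diagonalUnits n K).range ↔ (g : Matrix n n K).IsDiag := by
  refine ⟨?_, fun hg => ?_⟩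
  · rintro ⟨u, rfl⟩
    exact isDiag_diagonal _
  · have hne : ∀ i, (g : Matrix n n K) i i ≠ 0 := by
      have := g.det_ne_zero
      rw [← hg.diagonal_diag, det_diagonal, Finset.prod_ne_zero_iff] at this
      exact fun i => this i (Finset.mem_univ i)
    exact ⟨fun i => Units.mk0 _ (hne i), Units.ext hg.diagonal_diag⟩

theorem diagonalUnits_neg_one : diagonalUnits n K (-1) = -1 := by
  ext : 1
  simp only [coe_diagonalUnits, Units.val_neg, Units.val_one, Pi.neg_apply, Pi.one_apply]
  rw [← diagonal_one, ← diagonal_neg]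

variable (K) in
def diagonalFixing (i : n) : Subgroup (GL n K) :=
  (Pi.evalMonoidHom (fun _ : n => Kˣ) i).ker.map (diagonalUnits n K)

variable (K) in
def diagonalFixingUpToSign (i : n) : Subgroup (GL n K) :=
  ((Subgroup.zpowers (-1)).comap (Pi.evalMonoidHom (fun _ : n => Kˣ) i)).map (diagonalUnits n K)

variable (i : n)

theorem diagonalFixing_le_diagonalFixingUpToSign :
    diagonalFixing K i ≤ diagonalFixingUpToSign K i :=
  Subgroup.map_mono (MonoidHom.ker_le_comap _ _)

theorem diagonalFixingUpToSign_le_range :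
    diagonalFixingUpToSign K i ≤ (diagonalUnits n K).range :=
  Subgroup.map_le_range _ _

theorem relIndex_diagonalFixing (hK : ringChar K ≠ 2) :
    (diagonalFixing K i).relIndex (diagonalFixingUpToSign K i) = 2 := by
  rw [diagonalFixing, diagonalFixingUpToSign,
    Subgroup.relIndex_map_map_of_injective _ _ diagonalUnits_injective, Subgroup.relIndex_ker,
    Subgroup.map_comap_eq_self_of_surjective (Function.surjective_eval i), Nat.card_zpowers,
    Units.orderOf_neg_one hK]

theorem relIndex_diagonalFixingUpToSign_mul_two (hK : ringChar K ≠ 2) :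
    (diagonalFixingUpToSign K i).relIndex (diagonalUnits n K).range * 2 = Nat.card Kˣ := by
  rw [diagonalFixingUpToSign, MonoidHom.range_eq_map,
    Subgroup.relIndex_map_map_of_injective _ _ diagonalUnits_injective,
    Subgroup.relIndex_top_right, Subgroup.index_comap_of_surjective _ (Function.surjective_eval i),
    ← Units.orderOf_neg_one hK, ← Nat.card_zpowers, Subgroup.index_mul_card]

theorem neg_one_mem_diagonalFixingUpToSign : (-1 : GL n K) ∈ diagonalFixingUpToSign K i :=
  ⟨-1, Subgroup.mem_zpowers _, diagonalUnits_neg_one⟩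

theorem neg_one_not_mem_diagonalFixing (hK : ringChar K ≠ 2) :
    (-1 : GL n K) ∉ diagonalFixing K i := by
  rintro ⟨u, hu, h⟩
  rw [← diagonalUnits_neg_one] at h
  obtain rfl := diagonalUnits_injective h
  exact Ring.neg_one_ne_one_of_char_ne_two hK (congrArg Units.val hu)

theorem mulVec_single_of_mem_diagonalFixing {g : GL n K} (hg : g ∈ diagonalFixing K i) :
    (g : Matrix n n K) *ᵥ Pi.single i 1 = Pi.single i 1 := by
  obtain ⟨u, hu, rfl⟩ := hg
  funext j
  rw [coe_diagonalUnits, mulVec_diagonal]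
  by_cases hj : j = i
  · subst hj
    simp [show u j = 1 from hu]
  · simp [hj]

end GeneralLinearGroup

end Matrix

namespace Paper

open Matrix GeneralLinearGroup

variable {ℓ : ℕ} [Fact ℓ.Prime] {Ns : Subgroup (GL2 ℓ)}

theorem range_diagonalUnits_le (hNs : (Ns : Set (GL2 ℓ)) = NsSet ℓ) :
    (diagonalUnits (Fin 2) (ZMod ℓ)).range ≤ Ns := fun g hg => by
  rw [← SetLike.mem_coe, hNs]
  exact Or.inl (isDiag_fin_two_iff.1 (mem_range_diagonalUnits_iff.1 hg))

theorem relIndex_range_diagonalUnits (hNs : (Ns : Set (GL2 ℓ)) = NsSet ℓ) :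
    (diagonalUnits (Fin 2) (ZMod ℓ)).range.relIndex Ns = 2 := by
  -- `w` swaps the two columns, exchanging diagonal and antidiagonal matrices.
  let w : GL2 ℓ := mkOfDetNeZero !![0, 1; 1, 0] (by simp)
  refine Subgroup.relIndex_eq_two_iff.2 ⟨w, ?_, fun b hb => ?_⟩
  · rw [← SetLike.mem_coe, hNs]
    exact Or.inr ⟨rfl, rfl⟩
  rw [← SetLike.mem_coe, hNs] at hb
  have hdet := b.det_ne_zero
  rw [det_fin_two] at hdet
  have hbw : ∀ i j, (b * w : GL2 ℓ) i j = b i (1 - j) := by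
    intro i j
    fin_cases j <;> simp [w, mul_apply, Fin.sum_univ_two]
  simp only [mem_range_diagonalUnits_iff, isDiag_fin_two_iff, hbw]
  rcases hb with ⟨h01, h10⟩ | ⟨h00, h11⟩ <;> simp_all [mat, xor_iff_not_iff]

theorem card_Ns (hNs : (Ns : Set (GL2 ℓ)) = NsSet ℓ) : Nat.card Ns = (ℓ - 1) ^ 2 * 2 := by
  rw [← Subgroup.card_mul_relIndex (range_diagonalUnits_le hNs),
    relIndex_range_diagonalUnits hNs,
    Nat.card_congr (MonoidHom.ofInjective diagonalUnits_injective).toEquiv.symm, Nat.card_fun,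
    Nat.card_units, Nat.card_zmod, Nat.card_fin]

theorem eq_one_of_mem_NsSet (hℓ : ℓ ≠ 2) {g : GL2 ℓ} (hg : g ∈ NsSet ℓ) (hdet : det g = 1)
    {v : Fin 2 → ZMod ℓ} (hv0 : v ≠ 0) (hv : mat g *ᵥ v = v) : g = 1 := by
  replace hdet : (mat g).det = 1 := congrArg Units.val hdet
  have hK : ringChar (ZMod ℓ) ≠ 2 := by rwa [ZMod.ringChar_zmod_n]
  rcases hg with hdiag | ⟨h00, h11⟩
  · exact Units.ext <|
      (isDiag_fin_two_iff.2 hdiag).eq_one_of_det_eq_one_of_mulVec_eq_self hdet hv0 hv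
  · exact absurd (eq_zero_of_mulVec_eq_self_of_antidiag hK h00 h11 hdet hv) hv0

theorem card_dvd_of_fixesVec (hℓ : ℓ ≠ 2) (hNs : (Ns : Set (GL2 ℓ)) = NsSet ℓ)
    {H : Subgroup (GL2 ℓ)} (hH : H ≤ Ns) (hfix : FixesVec H) : Nat.card H ∣ ℓ - 1 := by
  obtain ⟨v, hv0, hv⟩ := hfix
  have hinj : Function.Injective (det.comp H.subtype) := by
    rw [injective_iff_map_eq_one]
    rintro ⟨g, hg⟩ hdet
    have hgNs : g ∈ NsSet ℓ := by rw [← hNs]; exact hH hg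
    exact Subtype.ext (eq_one_of_mem_NsSet hℓ hgNs hdet hv0 (hv g hg))
  have := Subgroup.card_dvd_of_injective _ hinj
  rwa [Nat.card_units, Nat.card_zmod] at this

theorem neg_one_not_mem_of_fixesVec (hℓ : ℓ ≠ 2) {H : Subgroup (GL2 ℓ)} (hfix : FixesVec H) :
    (-1 : GL2 ℓ) ∉ H := by
  obtain ⟨v, hv0, hv⟩ := hfix
  refine fun h => hv0 (Pi.eq_zero_of_neg_eq_self (by rwa [ZMod.ringChar_zmod_n]) ?_)
  simpa [mat, neg_mulVec] using hv (-1) h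

end Paper

open Matrix.GeneralLinearGroup Paper

theorem statement_18 (ℓ : ℕ) (hℓ : Nat.Prime ℓ) (hodd : Odd ℓ)
    (Ns : Subgroup (GL2 ℓ)) (hNs : (Ns : Set (GL2 ℓ)) = Paper.NsSet ℓ) :
    (∃ G H : Subgroup (GL2 ℓ), G ≤ Ns ∧ Paper.TwistOf G H ∧ Paper.FixesVec H ∧
      G.relIndex Ns = ℓ - 1) ∧
    (∀ G H : Subgroup (GL2 ℓ), G ≤ Ns → Paper.TwistOf G H → Paper.FixesVec H →
      (ℓ - 1) ∣ G.relIndex Ns) := by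
  have : Fact ℓ.Prime := ⟨hℓ⟩
  have hℓ2 : ℓ ≠ 2 := by rintro rfl; exact absurd hodd (by decide)
  have hK : ringChar (ZMod ℓ) ≠ 2 := by rwa [ZMod.ringChar_zmod_n]
  have hCs := range_diagonalUnits_le hNs
  refine ⟨⟨diagonalFixingUpToSign _ 1, diagonalFixing _ 1, ?_, Or.inr ?_, ?_, ?_⟩, ?_⟩
  · exact (diagonalFixingUpToSign_le_range 1).trans hCs
  · rw [sup_eq_left.2 ((Subgroup.closure_le _).2
      (Set.singleton_subset_iff.2 (neg_one_mem_diagonalFixingUpToSign 1)))]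
    exact ⟨diagonalFixing_le_diagonalFixingUpToSign 1, relIndex_diagonalFixing 1 hK,
      neg_one_not_mem_diagonalFixing 1 hK⟩
  · exact ⟨Pi.single 1 1, by simp, fun _ => mulVec_single_of_mem_diagonalFixing 1⟩
  · rw [← Subgroup.relIndex_mul_relIndex _ _ _ (diagonalFixingUpToSign_le_range 1) hCs,
      relIndex_range_diagonalUnits hNs, relIndex_diagonalFixingUpToSign_mul_two 1 hK,
      Nat.card_units, Nat.card_zmod]
  rintro G H hG (rfl | ⟨hHK, hrel, -⟩) hfix
  · exact absurd (Subgroup.mem_sup_right (Subgroup.subset_closure (Set.mem_singleton _)))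
      (neg_one_not_mem_of_fixesVec hℓ2 hfix)
  have hGK : G ⊔ Subgroup.closure {-1} ≤ Ns := sup_le hG ((Subgroup.closure_le _).2
    (Set.singleton_subset_iff.2 (hCs ⟨-1, diagonalUnits_neg_one⟩)))
  have hcard : Nat.card (G ⊔ Subgroup.closure {-1} : Subgroup (GL2 ℓ)) = Nat.card H * 2 := by
    rw [← Subgroup.card_mul_relIndex hHK, hrel]
  have hG2 : Nat.card G ∣ (ℓ - 1) * 2 := (Subgroup.card_dvd_of_le le_sup_left).trans
    (hcard ▸ mul_dvd_mul_right (card_dvd_of_fixesVec hℓ2 hNs (hHK.trans hGK) hfix) 2)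
  exact Subgroup.dvd_relIndex_of_card_dvd hG (by rw [card_Ns hNs]; ring) hG2
end
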